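/- (Multiplicativity of the repair count over conflict-independent parts.) Let A and B be disjoint finite sets with no conflicts across them (¬C(a,b) for all a ∈ A, b ∈ B). Then for every E ⊆ A ∪ B: the repairs of E are exactly the sets of the form S₁ ∪ S₂ where S₁ is a repair of E ∩ A and S₂ is a repair of E ∩ B, and consequently I_MC(E) = I_MC(E ∩ A) · I_MC(E ∩ B). -/
import Mathlib


open scoped BigOperators Classical

variable {α : Type*} [DecidableEq α]

/-- A finite set `E` is consistent if it contains no two distinct conflicting elements. -/
def Consistent (C : α → α → Prop) (E : Finset α) : Prop :=
  ∀ g ∈ E, ∀ h ∈ E, g ≠ h → ¬ C g h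

/-- A repair of `E` is a maximal (under inclusion) consistent subset of `E`. -/
def IsRepair (C : α → α → Prop) (S E : Finset α) : Prop :=
  S ⊆ E ∧ Consistent C S ∧ ∀ S', S ⊆ S' → S' ⊆ E → Consistent C S' → S' = S

/-- The inconsistency measure `I_MC`: the number of repairs of `E`. -/
noncomputable def IMC (C : α → α → Prop) (E : Finset α) : ℕ :=
  (E.powerset.filter fun S => IsRepair C S E).card

lemma Consistent.mono {C : α → α → Prop} {S T : Finset α} (h : Consistent C T)
    (hST : S ⊆ T) : Consistent C S := fun g hg h' hh => h g (hST hg) h' (hST hh)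

/-- Multiplicativity of the repair count over conflict-independent parts: if `A`
and `B` are disjoint with no conflicts across them, then the repairs of `E ⊆ A ∪ B`
are exactly the unions of a repair of `E ∩ A` and a repair of `E ∩ B`, and
`I_MC(E) = I_MC(E ∩ A) · I_MC(E ∩ B)`. -/
theorem IMC_multiplicative_decomposition (C : α → α → Prop) (hsymm : Symmetric C)
    (A B : Finset α) (hdisj : Disjoint A B)
    (hC : ∀ a ∈ A, ∀ b ∈ B, ¬ C a b) (E : Finset α) (hE : E ⊆ A ∪ B) :
    (∀ S, IsRepair C S E ↔
        ∃ S₁ S₂, IsRepair C S₁ (E ∩ A) ∧ IsRepair C S₂ (E ∩ B) ∧ S = S₁ ∪ S₂) ∧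
      IMC C E = IMC C (E ∩ A) * IMC C (E ∩ B) := by
  classical
  have hcross : ∀ S₁ S₂ : Finset α, S₁ ⊆ A → S₂ ⊆ B →
      Consistent C S₁ → Consistent C S₂ → Consistent C (S₁ ∪ S₂) := by
    intro S₁ S₂ h1 h2 c1 c2 g hg h hh hne
    simp only [Finset.mem_union] at hg hh
    rcases hg with hg | hg <;> rcases hh with hh | hh
    · exact c1 g hg h hh hne
    · exact hC g (h1 hg) h (h2 hh)
    · exact fun hCgh => hC h (h1 hh) g (h2 hg) (hsymm hCgh)
    · exact c2 g hg h hh hne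
  have hsplit : ∀ S : Finset α, S ⊆ E → S = S ∩ A ∪ S ∩ B := by
    intro S hS
    ext x
    simp only [Finset.mem_union, Finset.mem_inter]
    constructor
    · intro hx
      rcases Finset.mem_union.mp (hE (hS hx)) with h | h
      · exact Or.inl ⟨hx, h⟩
      · exact Or.inr ⟨hx, h⟩
    · rintro (⟨hx, _⟩ | ⟨hx, _⟩) <;> exact hx
  have key : ∀ S, IsRepair C S E ↔
      ∃ S₁ S₂, IsRepair C S₁ (E ∩ A) ∧ IsRepair C S₂ (E ∩ B) ∧ S = S₁ ∪ S₂ := by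
    intro S
    constructor
    · rintro ⟨hSE, hScon, hSmax⟩
      refine ⟨S ∩ A, S ∩ B, ⟨?_, hScon.mono Finset.inter_subset_left, ?_⟩,
        ⟨?_, hScon.mono Finset.inter_subset_left, ?_⟩, hsplit S hSE⟩
      · exact Finset.inter_subset_inter hSE (le_refl A)
      · intro S' hsub hsub' hcon
        have hS'A : S' ⊆ A := hsub'.trans Finset.inter_subset_right
        have hu : S' ∪ S ∩ B = S := by
          apply hSmax
          · intro x hx
            have hx' : x ∈ S ∩ A ∪ S ∩ B := by rw [← hsplit S hSE]; exact hx
            rcases Finset.mem_union.mp hx' with h | h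
            · exact Finset.mem_union_left _ (hsub (by simpa using h))
            · exact Finset.mem_union_right _ h
          · exact Finset.union_subset (hsub'.trans Finset.inter_subset_left)
              ((Finset.inter_subset_left).trans hSE)
          · exact hcross _ _ hS'A Finset.inter_subset_right hcon
              (hScon.mono Finset.inter_subset_left)
        apply Finset.Subset.antisymm _ hsub
        intro x hx
        exact Finset.mem_inter.mpr ⟨hu ▸ Finset.mem_union_left _ hx, hS'A hx⟩
      · exact Finset.inter_subset_inter hSE (le_refl B)
      · intro S' hsub hsub' hcon
        have hS'B : S' ⊆ B := hsub'.trans Finset.inter_subset_right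
        have hu : S ∩ A ∪ S' = S := by
          apply hSmax
          · intro x hx
            have hx' : x ∈ S ∩ A ∪ S ∩ B := by rw [← hsplit S hSE]; exact hx
            rcases Finset.mem_union.mp hx' with h | h
            · exact Finset.mem_union_left _ h
            · exact Finset.mem_union_right _ (hsub (by simpa using h))
          · exact Finset.union_subset ((Finset.inter_subset_left).trans hSE)
              (hsub'.trans Finset.inter_subset_left)
          · exact hcross _ _ Finset.inter_subset_right hS'B
              (hScon.mono Finset.inter_subset_left) hcon
        apply Finset.Subset.antisymm _ hsub
        intro x hx
        exact Finset.mem_inter.mpr ⟨hu ▸ Finset.mem_union_right _ hx, hS'B hx⟩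
    · rintro ⟨S₁, S₂, ⟨h1E, h1c, h1m⟩, ⟨h2E, h2c, h2m⟩, rfl⟩
      have hS1A : S₁ ⊆ A := h1E.trans Finset.inter_subset_right
      have hS2B : S₂ ⊆ B := h2E.trans Finset.inter_subset_right
      refine ⟨Finset.union_subset (h1E.trans Finset.inter_subset_left)
        (h2E.trans Finset.inter_subset_left), hcross _ _ hS1A hS2B h1c h2c, ?_⟩
      intro S' hsub hsub' hcon
      have hA : S' ∩ A = S₁ := by
        apply h1m
        · intro x hx
          exact Finset.mem_inter.mpr ⟨hsub (Finset.mem_union_left _ hx), hS1A hx⟩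
        · exact Finset.inter_subset_inter hsub' (le_refl A)
        · exact hcon.mono Finset.inter_subset_left
      have hB : S' ∩ B = S₂ := by
        apply h2m
        · intro x hx
          exact Finset.mem_inter.mpr ⟨hsub (Finset.mem_union_right _ hx), hS2B hx⟩
        · exact Finset.inter_subset_inter hsub' (le_refl B)
        · exact hcon.mono Finset.inter_subset_left
      calc S' = S' ∩ A ∪ S' ∩ B := hsplit S' hsub'
        _ = S₁ ∪ S₂ := by rw [hA, hB]
  have hiA : ∀ S₁ S₂ : Finset α, S₁ ⊆ A → S₂ ⊆ B → (S₁ ∪ S₂) ∩ A = S₁ := by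
    intro S₁ S₂ h1 h2
    have h20 : S₂ ∩ A = ∅ :=
      Finset.disjoint_iff_inter_eq_empty.mp (hdisj.symm.mono h2 le_rfl)
    rw [Finset.union_inter_distrib_right, Finset.inter_eq_left.mpr h1, h20,
      Finset.union_empty]
  have hiB : ∀ S₁ S₂ : Finset α, S₁ ⊆ A → S₂ ⊆ B → (S₁ ∪ S₂) ∩ B = S₂ := by
    intro S₁ S₂ h1 h2
    have h10 : S₁ ∩ B = ∅ :=
      Finset.disjoint_iff_inter_eq_empty.mp (hdisj.mono h1 le_rfl)
    rw [Finset.union_inter_distrib_right, Finset.inter_eq_left.mpr h2, h10,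
      Finset.empty_union]
  refine ⟨key, ?_⟩
  unfold IMC
  rw [← Finset.card_product]
  apply Finset.card_bij' (fun S _ => (S ∩ A, S ∩ B)) (fun p _ => p.1 ∪ p.2)
  · intro S hS
    simp only [Finset.mem_filter, Finset.mem_powerset] at hS ⊢
    obtain ⟨hSE, hrep⟩ := hS
    obtain ⟨S₁, S₂, h1, h2, heq⟩ := (key S).mp hrep
    have hS1A : S₁ ⊆ A := h1.1.trans Finset.inter_subset_right
    have hS2B : S₂ ⊆ B := h2.1.trans Finset.inter_subset_right
    have eA : S ∩ A = S₁ := by rw [heq]; exact hiA _ _ hS1A hS2B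
    have eB : S ∩ B = S₂ := by rw [heq]; exact hiB _ _ hS1A hS2B
    rw [Finset.mem_product]
    simp only [Finset.mem_filter, Finset.mem_powerset]
    exact ⟨⟨eA ▸ h1.1, eA ▸ h1⟩, ⟨eB ▸ h2.1, eB ▸ h2⟩⟩
  · intro p hp
    rw [Finset.mem_product] at hp
    simp only [Finset.mem_filter, Finset.mem_powerset] at hp ⊢
    refine ⟨Finset.union_subset (hp.1.1.trans Finset.inter_subset_left)
      (hp.2.1.trans Finset.inter_subset_left), ?_⟩
    exact (key _).mpr ⟨p.1, p.2, hp.1.2, hp.2.2, rfl⟩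
  · intro S hS
    simp only [Finset.mem_filter, Finset.mem_powerset] at hS
    exact (hsplit S hS.1).symm
  · intro p hp
    rw [Finset.mem_product] at hp
    simp only [Finset.mem_filter, Finset.mem_powerset] at hp
    have hS1A : p.1 ⊆ A := hp.1.1.trans Finset.inter_subset_right
    have hS2B : p.2 ⊆ B := hp.2.1.trans Finset.inter_subset_right
    exact Prod.ext (hiA _ _ hS1A hS2B) (hiB _ _ hS1A hS2B)
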